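/- Let M be a complete symmetric monoidal closed category, F : C → M, G : D → M lax functors, σ₁ = (p₁,σ₁), σ₂ = (p₂,σ₂) : F → G lax transformations, and α : p₁ → p₂ a strict 2-natural transformation. Then morphisms I → ∫_{σ₁}^{σ₂} Gα in M are in natural bijection with nerve-transformations σ₁ → σ₂ lying over α, where ∫_{σ₁}^{σ₂} Gα is the equalizer of the two canonical maps ∏_{c ∈ Ob C} G(α_c) ⇉ ∏_{f : c → d} Hom_M(F(f), G(α_d ∘ p₁f)). -/

import Mathlib

open CategoryTheory CategoryTheory.Limits CategoryTheory.MonoidalCategory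
open CategoryTheory.Bicategory

universe w v u w₂ v₂ u₂ w₃ v₃ u₃ v₀ u₀

/-- A lax functor from a strict 2-category `C` to a monoidal category `M`,
the latter viewed as a bicategory with a single object. -/
structure MonLaxFunctor (C : Type u) [Bicategory.{w, v} C] [Bicategory.Strict C]
    (M : Type u₀) [Category.{v₀} M] [MonoidalCategory M] where
  map : ∀ {a b : C}, (a ⟶ b) → M
  map₂ : ∀ {a b : C} {f g : a ⟶ b}, (f ⟶ g) → (map f ⟶ map g)
  map₂_id : ∀ {a b : C} (f : a ⟶ b), map₂ (𝟙 f) = 𝟙 (map f)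
  map₂_comp : ∀ {a b : C} {f g h : a ⟶ b} (η : f ⟶ g) (θ : g ⟶ h),
    map₂ (η ≫ θ) = map₂ η ≫ map₂ θ
  /-- laxity maps -/
  μ : ∀ {a b c : C} (f : a ⟶ b) (g : b ⟶ c), map f ⊗ map g ⟶ map (f ≫ g)
  /-- unit laxity maps -/
  ε₀ : ∀ a : C, 𝟙_ M ⟶ map (𝟙 a)
  μ_natural :
    ∀ {a b c : C} {f f' : a ⟶ b} {g g' : b ⟶ c} (η : f ⟶ f') (θ : g ⟶ g'),
      (map₂ η ⊗ₘ map₂ θ) ≫ μ f' g' = μ f g ≫ map₂ (η ▷ g ≫ f' ◁ θ)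
  assoc :
    ∀ {a b c d : C} (f : a ⟶ b) (g : b ⟶ c) (h : c ⟶ d),
      (μ f g ⊗ₘ 𝟙 (map h)) ≫ μ (f ≫ g) h ≫ eqToHom (by rw [Category.assoc]) =
        (α_ (map f) (map g) (map h)).hom ≫ (𝟙 (map f) ⊗ₘ μ g h) ≫ μ f (g ≫ h)
  left_unit :
    ∀ {a b : C} (f : a ⟶ b),
      (ε₀ a ⊗ₘ 𝟙 (map f)) ≫ μ (𝟙 a) f = (λ_ (map f)).hom ≫ eqToHom (by rw [Category.id_comp])
  right_unit :
    ∀ {a b : C} (f : a ⟶ b),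
      (𝟙 (map f) ⊗ₘ ε₀ b) ≫ μ f (𝟙 b) = (ρ_ (map f)).hom ≫ eqToHom (by rw [Category.comp_id])

namespace MonLaxFunctor

variable {C : Type u} [Bicategory.{w, v} C] [Bicategory.Strict C]
variable {M : Type u₀} [Category.{v₀} M] [MonoidalCategory M]

/-- Composition of "elements" of a lax functor, via the laxity maps. -/
def elComp (F : MonLaxFunctor C M) {a b c : C} {k : a ⟶ b} {k' : b ⟶ c}
    (x : 𝟙_ M ⟶ F.map k) (y : 𝟙_ M ⟶ F.map k') : 𝟙_ M ⟶ F.map (k ≫ k') :=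
  (λ_ (𝟙_ M)).inv ≫ (x ⊗ₘ y) ≫ F.μ k k'

/-- Objects of the category of elements `El(F)(A,B)`. -/
structure El (F : MonLaxFunctor C M) (A B : C) where
  k : A ⟶ B
  x : 𝟙_ M ⟶ F.map k

instance elCategory (F : MonLaxFunctor C M) (A B : C) : Category (F.El A B) where
  Hom e e' := { α : e.k ⟶ e'.k // e.x ≫ F.map₂ α = e'.x }
  id e := ⟨𝟙 e.k, by rw [F.map₂_id, Category.comp_id]⟩
  comp u v := ⟨u.1 ≫ v.1, by rw [F.map₂_comp, ← Category.assoc, u.2, v.2]⟩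
  id_comp u := Subtype.ext (Category.id_comp u.1)
  comp_id u := Subtype.ext (Category.comp_id u.1)
  assoc u v w := Subtype.ext (Category.assoc u.1 v.1 w.1)

/-- The `Set`-valued functor `k ↦ Hom_M(I, F k)` on the hom-category `C(A,B)`. -/
def elementsFunctor (F : MonLaxFunctor C M) (A B : C) : (A ⟶ B) ⥤ Type v₀ where
  obj k := 𝟙_ M ⟶ F.map k
  map α := TypeCat.ofHom fun x => x ≫ F.map₂ α
  map_id k := by ext x; simp [F.map₂_id]
  map_comp α β := by
    ext x
    show x ≫ F.map₂ (α ≫ β) = (x ≫ F.map₂ α) ≫ F.map₂ β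
    rw [F.map₂_comp, Category.assoc]

/-- The projection `Φ_{A,B} : El(F)(A,B) ⥤ C(A,B)`. -/
def elProj (F : MonLaxFunctor C M) (A B : C) : F.El A B ⥤ (A ⟶ B) where
  obj e := e.k
  map u := u.1
  map_id _ := rfl
  map_comp _ _ := rfl

end MonLaxFunctor

/-- A strict 2-functor between strict 2-categories. -/
structure StrictTwoFunctor (C : Type u) [Bicategory.{w, v} C] [Bicategory.Strict C]
    (D : Type u₂) [Bicategory.{w₂, v₂} D] [Bicategory.Strict D] where
  obj : C → D
  map : ∀ {a b : C}, (a ⟶ b) → (obj a ⟶ obj b)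
  map₂ : ∀ {a b : C} {f g : a ⟶ b}, (f ⟶ g) → (map f ⟶ map g)
  map_id : ∀ a : C, map (𝟙 a) = 𝟙 (obj a)
  map_comp : ∀ {a b c : C} (f : a ⟶ b) (g : b ⟶ c), map (f ≫ g) = map f ≫ map g
  map₂_id : ∀ {a b : C} (f : a ⟶ b), map₂ (𝟙 f) = 𝟙 (map f)
  map₂_comp : ∀ {a b : C} {f g h : a ⟶ b} (η : f ⟶ g) (θ : g ⟶ h),
    map₂ (η ≫ θ) = map₂ η ≫ map₂ θ
  map₂_whisker_left : ∀ {a b c : C} (f : a ⟶ b) {g h : b ⟶ c} (η : g ⟶ h),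
    map₂ (f ◁ η) = eqToHom (map_comp f g) ≫ map f ◁ map₂ η ≫ eqToHom (map_comp f h).symm
  map₂_whisker_right : ∀ {a b c : C} {f g : a ⟶ b} (η : f ⟶ g) (h : b ⟶ c),
    map₂ (η ▷ h) = eqToHom (map_comp f h) ≫ map₂ η ▷ map h ≫ eqToHom (map_comp g h).symm

section Trans

variable {C : Type u} [Bicategory.{w, v} C] [Bicategory.Strict C]
variable {D : Type u₂} [Bicategory.{w₂, v₂} D] [Bicategory.Strict D]
variable {M : Type u₀} [Category.{v₀} M] [MonoidalCategory M]

/-- A lax transformation (icon) `σ : F → p* G` over a strict 2-functor `p`;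
a morphism of `M`-valued lax functors. -/
structure MonLaxTrans (F : MonLaxFunctor C M) (G : MonLaxFunctor D M)
    (p : StrictTwoFunctor C D) where
  app : ∀ {a b : C} (f : a ⟶ b), F.map f ⟶ G.map (p.map f)
  naturality : ∀ {a b : C} {f g : a ⟶ b} (η : f ⟶ g),
    app f ≫ G.map₂ (p.map₂ η) = F.map₂ η ≫ app g
  comp : ∀ {a b c : C} (f : a ⟶ b) (g : b ⟶ c),
    F.μ f g ≫ app (f ≫ g) =
      (app f ⊗ₘ app g) ≫ G.μ (p.map f) (p.map g) ≫ eqToHom (by rw [p.map_comp])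
  unit : ∀ a : C, F.ε₀ a ≫ app (𝟙 a) = G.ε₀ (p.obj a) ≫ eqToHom (by rw [p.map_id])

/-- A strict 2-natural transformation between strict 2-functors. -/
structure Strict2NatTrans (p₁ p₂ : StrictTwoFunctor C D) where
  app : ∀ c : C, p₁.obj c ⟶ p₂.obj c
  naturality : ∀ {c d : C} (f : c ⟶ d), p₁.map f ≫ app d = app c ≫ p₂.map f
  naturality₂ : ∀ {c d : C} {f g : c ⟶ d} (η : f ⟶ g),
    p₁.map₂ η ▷ app d ≫ eqToHom (naturality g) = eqToHom (naturality f) ≫ app c ◁ p₂.map₂ η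

/-- A modification between strict 2-natural transformations. -/
structure Modification2 {p₁ p₂ : StrictTwoFunctor C D} (α α' : Strict2NatTrans p₁ p₂) where
  app : ∀ c : C, α.app c ⟶ α'.app c
  w : ∀ {c d : C} (f : c ⟶ d),
    p₁.map f ◁ app d ≫ eqToHom (α'.naturality f) =
      eqToHom (α.naturality f) ≫ app c ▷ p₂.map f

/-- The hexagon axiom of a nerve-transformation `η : σ₁ → σ₂` over `α : p₁ → p₂`. -/
def IsNerveTrans {F : MonLaxFunctor C M} {G : MonLaxFunctor D M}
    {p₁ p₂ : StrictTwoFunctor C D} (σ₁ : MonLaxTrans F G p₁) (σ₂ : MonLaxTrans F G p₂)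
    (α : Strict2NatTrans p₁ p₂) (η : ∀ c : C, 𝟙_ M ⟶ G.map (α.app c)) : Prop :=
  ∀ {c d : C} (f : c ⟶ d),
    (ρ_ (F.map f)).inv ≫ (σ₁.app f ⊗ₘ η d) ≫ G.μ (p₁.map f) (α.app d) =
      (λ_ (F.map f)).inv ≫ (η c ⊗ₘ σ₂.app f) ≫ G.μ (α.app c) (p₂.map f) ≫
        eqToHom (by rw [α.naturality])

end Trans

section Classifier

variable {C : Type u} [Bicategory.{w, v} C] [Bicategory.Strict C]
variable {D : Type u₂} [Bicategory.{w₂, v₂} D] [Bicategory.Strict D]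
variable {M : Type u₀} [Category.{v₀} M] [MonoidalCategory M] [SymmetricCategory M]
  [MonoidalClosed M] [HasProducts.{u} M] [HasProducts.{max u v} M] [HasEqualizers M]

/-- The type of 1-morphisms of `C`. -/
abbrev OneCell (C : Type u) [Bicategory.{w, v} C] : Type max u v := Σ c d : C, c ⟶ d

variable (F : MonLaxFunctor C M) (G : MonLaxFunctor D M)
variable {p₁ p₂ p₃ p₄ : StrictTwoFunctor C D}

/-- First leg of the pair of parallel maps defining the classifying object. -/
noncomputable def classifyA (σ₁ : MonLaxTrans F G p₁) (σ₂ : MonLaxTrans F G p₂)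
    (α : Strict2NatTrans p₁ p₂) :
    (∏ᶜ fun c : C => G.map (α.app c)) ⟶
      ∏ᶜ fun t : OneCell C =>
        (ihom (F.map t.2.2)).obj (G.map (p₁.map t.2.2 ≫ α.app t.2.1)) :=
  Pi.lift fun t => MonoidalClosed.curry
    ((σ₁.app t.2.2 ⊗ₘ Pi.π _ t.2.1) ≫ G.μ (p₁.map t.2.2) (α.app t.2.1))

/-- Second leg of the pair of parallel maps defining the classifying object. -/
noncomputable def classifyB (σ₁ : MonLaxTrans F G p₁) (σ₂ : MonLaxTrans F G p₂)
    (α : Strict2NatTrans p₁ p₂) :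
    (∏ᶜ fun c : C => G.map (α.app c)) ⟶
      ∏ᶜ fun t : OneCell C =>
        (ihom (F.map t.2.2)).obj (G.map (p₁.map t.2.2 ≫ α.app t.2.1)) :=
  Pi.lift fun t => MonoidalClosed.curry
    ((β_ (F.map t.2.2) _).hom ≫ (Pi.π _ t.1 ⊗ₘ σ₂.app t.2.2) ≫
      G.μ (α.app t.1) (p₂.map t.2.2) ≫ eqToHom (by rw [α.naturality]))

/-- The classifying object `∫_{σ₁}^{σ₂} G α` for nerve-transformations over `α`. -/
noncomputable def nerveClassifier (σ₁ : MonLaxTrans F G p₁) (σ₂ : MonLaxTrans F G p₂)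
    (α : Strict2NatTrans p₁ p₂) : M :=
  equalizer (classifyA F G σ₁ σ₂ α) (classifyB F G σ₁ σ₂ α)

/-- The projection `∫_{σ₁}^{σ₂} G α ⟶ G (α_c)`. -/
noncomputable def classProj (σ₁ : MonLaxTrans F G p₁) (σ₂ : MonLaxTrans F G p₂)
    (α : Strict2NatTrans p₁ p₂) (c : C) :
    nerveClassifier F G σ₁ σ₂ α ⟶ G.map (α.app c) :=
  equalizer.ι (classifyA F G σ₁ σ₂ α) (classifyB F G σ₁ σ₂ α) ≫ Pi.π _ c

/-- `t` is the morphism on classifying objects induced by the modification `Γ`. -/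
def IsClassInduced {σ₁ : MonLaxTrans F G p₁} {σ₂ : MonLaxTrans F G p₂}
    {α α' : Strict2NatTrans p₁ p₂} (Γ : Modification2 α α')
    (t : nerveClassifier F G σ₁ σ₂ α ⟶ nerveClassifier F G σ₁ σ₂ α') : Prop :=
  ∀ c : C, t ≫ classProj F G σ₁ σ₂ α' c = classProj F G σ₁ σ₂ α c ≫ G.map₂ (Γ.app c)

/-- `m` is the canonical "laxity" morphism
`(∫_{σ₂}^{σ₃} G β) ⊗ (∫_{σ₁}^{σ₂} G α) ⟶ ∫_{σ₁}^{σ₃} G (β ∘ α)`. -/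
def IsClassLaxity {σ₁ : MonLaxTrans F G p₁} {σ₂ : MonLaxTrans F G p₂}
    {σ₃ : MonLaxTrans F G p₃} (α : Strict2NatTrans p₁ p₂) (β : Strict2NatTrans p₂ p₃)
    (βα : Strict2NatTrans p₁ p₃) (h : ∀ c : C, βα.app c = α.app c ≫ β.app c)
    (m : nerveClassifier F G σ₂ σ₃ β ⊗ nerveClassifier F G σ₁ σ₂ α ⟶
      nerveClassifier F G σ₁ σ₃ βα) : Prop :=
  ∀ c : C, m ≫ classProj F G σ₁ σ₃ βα c =
    (classProj F G σ₂ σ₃ β c ⊗ₘ classProj F G σ₁ σ₂ α c) ≫ (β_ _ _).hom ≫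
      G.μ (α.app c) (β.app c) ≫ eqToHom (by rw [h])

/-- The canonical evaluation map `F(f) ⊗ ∫_{σ₁}^{σ₂} G α ⟶ G(α_d ∘ p₁ f)`,
obtained from the equalizer and adjoint transposition. -/
noncomputable def evMap (σ₁ : MonLaxTrans F G p₁) (σ₂ : MonLaxTrans F G p₂)
    (α : Strict2NatTrans p₁ p₂) {c d : C} (f : c ⟶ d) :
    F.map f ⊗ nerveClassifier F G σ₁ σ₂ α ⟶ G.map (p₁.map f ≫ α.app d) :=
  MonoidalClosed.uncurry
    (equalizer.ι (classifyA F G σ₁ σ₂ α) (classifyB F G σ₁ σ₂ α) ≫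
      classifyA F G σ₁ σ₂ α ≫ Pi.π _ (⟨c, d, f⟩ : OneCell C))

end Classifier


section Aux

variable {C : Type u} [Bicategory.{w, v} C] [Bicategory.Strict C]
variable {D : Type u₂} [Bicategory.{w₂, v₂} D] [Bicategory.Strict D]
variable {M : Type u₀} [Category.{v₀} M] [MonoidalCategory M] [SymmetricCategory M]
  [MonoidalClosed M] [HasProducts.{u} M] [HasProducts.{max u v} M] [HasEqualizers M]
variable (F : MonLaxFunctor C M) (G : MonLaxFunctor D M)
variable {p₁ p₂ : StrictTwoFunctor C D}

theorem comp_classify_component (σ₁ : MonLaxTrans F G p₁) (σ₂ : MonLaxTrans F G p₂)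
    (α : Strict2NatTrans p₁ p₂) (x : 𝟙_ M ⟶ ∏ᶜ fun c : C => G.map (α.app c))
    {c d : C} (f : c ⟶ d) :
    (x ≫ classifyA F G σ₁ σ₂ α ≫ Pi.π _ (⟨c, d, f⟩ : OneCell C) =
      x ≫ classifyB F G σ₁ σ₂ α ≫ Pi.π _ (⟨c, d, f⟩ : OneCell C)) ↔
    ((ρ_ (F.map f)).inv ≫ (σ₁.app f ⊗ₘ (x ≫ Pi.π _ d)) ≫ G.μ (p₁.map f) (α.app d) =
      (λ_ (F.map f)).inv ≫ ((x ≫ Pi.π _ c) ⊗ₘ σ₂.app f) ≫ G.μ (α.app c) (p₂.map f) ≫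
        eqToHom (by rw [α.naturality])) := by
  have hβ : (ρ_ (F.map f)).hom ≫ (λ_ (F.map f)).inv = (β_ (F.map f) (𝟙_ M)).hom := by
    rw [← braiding_leftUnitor (X := F.map f)]; simp
  have ea : F.map f ◁ x ≫ (σ₁.app f ⊗ₘ Pi.π (fun c : C => G.map (α.app c)) d) ≫
        G.μ (p₁.map f) (α.app d)
      = (ρ_ (F.map f)).hom ≫ ((ρ_ (F.map f)).inv ≫
          (σ₁.app f ⊗ₘ (x ≫ Pi.π _ d)) ≫ G.μ (p₁.map f) (α.app d)) := by
    rw [Iso.hom_inv_id_assoc, ← id_tensorHom, tensorHom_comp_tensorHom_assoc, Category.id_comp]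
  have eb : F.map f ◁ x ≫ (β_ (F.map f) _).hom ≫
        (Pi.π (fun c : C => G.map (α.app c)) c ⊗ₘ σ₂.app f) ≫
          G.μ (α.app c) (p₂.map f) ≫ eqToHom (congrArg G.map (α.naturality f).symm)
      = (ρ_ (F.map f)).hom ≫ ((λ_ (F.map f)).inv ≫
          ((x ≫ Pi.π _ c) ⊗ₘ σ₂.app f) ≫ G.μ (α.app c) (p₂.map f) ≫
            eqToHom (congrArg G.map (α.naturality f).symm)) := by
    rw [BraidedCategory.braiding_naturality_right_assoc, ← reassoc_of% hβ,
      ← tensorHom_id, tensorHom_comp_tensorHom_assoc, Category.id_comp]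
  rw [classifyA, classifyB, limit.lift_π, limit.lift_π]
  show (x ≫ MonoidalClosed.curry _ = x ≫ MonoidalClosed.curry _) ↔ _
  rw [← MonoidalClosed.curry_natural_left, ← MonoidalClosed.curry_natural_left,
    MonoidalClosed.curry_injective.eq_iff, ea, eb, cancel_epi]

end Aux

/-- morphisms `I ⟶ ∫_(σ₁)^(σ₂) G α` classify nerve-transformations
`σ₁ → σ₂` lying over `α`. -/
theorem nerveClassifier_spec
    {C : Type u} [Bicategory.{w, v} C] [Bicategory.Strict C]
    {D : Type u₂} [Bicategory.{w₂, v₂} D] [Bicategory.Strict D]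
    {M : Type u₀} [Category.{v₀} M] [MonoidalCategory M]
    [SymmetricCategory M] [MonoidalClosed M]
    [HasProducts.{u} M] [HasProducts.{max u v} M] [HasEqualizers M]
    (F : MonLaxFunctor C M) (G : MonLaxFunctor D M)
    {p₁ p₂ : StrictTwoFunctor C D}
    (σ₁ : MonLaxTrans F G p₁) (σ₂ : MonLaxTrans F G p₂)
    (α : Strict2NatTrans p₁ p₂) (η : ∀ c : C, 𝟙_ M ⟶ G.map (α.app c)) :
    IsNerveTrans σ₁ σ₂ α η ↔
      ∃! φ : 𝟙_ M ⟶ nerveClassifier F G σ₁ σ₂ α,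
        ∀ c : C, η c = φ ≫ classProj F G σ₁ σ₂ α c := by
  constructor
  · intro H
    have hx : ∀ c : C, Pi.lift η ≫ Pi.π (fun c : C => G.map (α.app c)) c = η c := fun c => by
      simp
    have heq : Pi.lift η ≫ classifyA F G σ₁ σ₂ α = Pi.lift η ≫ classifyB F G σ₁ σ₂ α := by
      apply limit.hom_ext
      rintro ⟨⟨c, d, f⟩⟩
      have h2 := (comp_classify_component F G σ₁ σ₂ α (Pi.lift η) f).mpr (by
        rw [hx c, hx d]; exact H f)
      simpa using h2
    refine ⟨equalizer.lift (Pi.lift η) heq, fun c => ?_, fun ψ hψ => ?_⟩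
    · rw [classProj]; erw [equalizer.lift_ι_assoc]
      simp
    · apply equalizer.hom_ext
      apply limit.hom_ext
      rintro ⟨c⟩
      have : ψ ≫ equalizer.ι (classifyA F G σ₁ σ₂ α) (classifyB F G σ₁ σ₂ α) ≫
          Pi.π (fun c : C => G.map (α.app c)) c = η c := (hψ c).symm
      simp only [Category.assoc]
      rw [equalizer.lift_ι_assoc]
      exact (Category.assoc _ _ _).trans (this.trans (Pi.lift_π η c).symm)
  · rintro ⟨φ, hφ, -⟩
    intro c d f
    set x : 𝟙_ M ⟶ ∏ᶜ fun c : C => G.map (α.app c) :=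
      φ ≫ equalizer.ι (classifyA F G σ₁ σ₂ α) (classifyB F G σ₁ σ₂ α) with hxdef
    have hx : ∀ c : C, x ≫ Pi.π (fun c : C => G.map (α.app c)) c = η c := fun c => by
      rw [hxdef]; erw [Category.assoc]; exact (hφ c).symm
    have hcond : x ≫ classifyA F G σ₁ σ₂ α ≫ Pi.π _ (⟨c, d, f⟩ : OneCell C) =
        x ≫ classifyB F G σ₁ σ₂ α ≫ Pi.π _ (⟨c, d, f⟩ : OneCell C) := by
      rw [hxdef]
      simp only [Category.assoc]
      exact (Category.assoc _ _ _).trans ((φ ≫= equalizer.condition_assoc (classifyA F G σ₁ σ₂ α) (classifyB F G σ₁ σ₂ α) _).trans (Category.assoc _ _ _).symm)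
    have h2 := (comp_classify_component F G σ₁ σ₂ α x f).mp hcond
    rw [hx c, hx d] at h2
    exact h2
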